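/- arXiv:1601.05761 — 2 statements merged into one kernel-verified Lean document; each statement's English description precedes it below -/
import Mathlib

section
/- Let μ ∈ M(𝕋^d) and let Λ ⊂ ℤ^d be a finite subset. Suppose φ ∈ U satisfies ⟨φ,μ⟩ = ε(μ,Λ) and |φ(x)| = 1 for all x ∈ 𝕋^d. Then Γ(μ,Λ) ≠ ∅. -/
/- Setting: `M(𝕋^d)`, the space of complex bounded Radon measures on the `d`-dimensional
torus, is identified with the continuous dual of `C(𝕋^d, ℂ)` via the Riesz representation
theorem; the total variation norm corresponds to the operator norm. -/

open MeasureTheory Complex Real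

noncomputable section

attribute [local instance] ZeroLEOneClass.factZeroLtOne

/-- The `d`-dimensional torus `𝕋^d = (ℝ/ℤ)^d`. -/
abbrev Torus (d : ℕ) : Type := Fin d → AddCircle (1 : ℝ)

/-- The character `x ↦ e^{2πi m·x}` on the torus, for `m ∈ ℤ^d`. -/
def torusChar {d : ℕ} (m : Fin d → ℤ) : C(Torus d, ℂ) :=
  ⟨fun x => ∏ i, fourier (m i) (x i), by
    refine continuous_finset_prod _ fun i _ => ?_
    exact (map_continuous (fourier (m i))).comp (continuous_apply i)⟩

/-- The space `M(𝕋^d)` of complex bounded Radon measures on the torus, identified (via the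
Riesz representation theorem) with the continuous dual of `C(𝕋^d, ℂ)`; the total variation
norm is the operator norm. -/
abbrev TorusMeasure (d : ℕ) : Type := C(Torus d, ℂ) →L[ℂ] ℂ

/-- The Fourier coefficient `μ̂(m) = ∫_{𝕋^d} e^{-2πi m·x} dμ(x)`. -/
def mFourierCoeff {d : ℕ} (μ : TorusMeasure d) (m : Fin d → ℤ) : ℂ :=
  μ (torusChar (-m))

/-- `ν` is an extrapolation of `μ` from `Λ` if `ν̂ = μ̂` on `Λ`. -/
def IsExtrapolation {d : ℕ} (μ : TorusMeasure d) (Λ : Finset (Fin d → ℤ))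
    (ν : TorusMeasure d) : Prop :=
  ∀ m ∈ Λ, mFourierCoeff ν m = mFourierCoeff μ m

/-- `ε(μ,Λ) = inf {‖σ‖ : σ ∈ M(𝕋^d), σ̂ = μ̂ on Λ}`. -/
def minExtNorm {d : ℕ} (μ : TorusMeasure d) (Λ : Finset (Fin d → ℤ)) : ℝ :=
  sInf ((fun ν => ‖ν‖) '' {ν | IsExtrapolation μ Λ ν})

/-- `ν` is a minimal extrapolation of `μ` from `Λ`, i.e. `ν ∈ 𝓔(μ,Λ)`:
an extrapolation whose total variation norm equals `ε(μ,Λ)`. -/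
def IsMinimalExtrapolation {d : ℕ} (μ : TorusMeasure d) (Λ : Finset (Fin d → ℤ))
    (ν : TorusMeasure d) : Prop :=
  IsExtrapolation μ Λ ν ∧ ‖ν‖ = minExtNorm μ Λ

/-- `Γ(μ,Λ) = {m ∈ Λ : |μ̂(m)| = ε(μ,Λ)}`. -/
def gammaSet {d : ℕ} (μ : TorusMeasure d) (Λ : Finset (Fin d → ℤ)) : Set (Fin d → ℤ) :=
  {m | m ∈ Λ ∧ ‖mFourierCoeff μ m‖ = minExtNorm μ Λ}

/-- The measure `ν` is supported in the set `S`: it annihilates every continuous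
function vanishing on `S` (for closed `S` this says `supp(ν) ⊆ S`). -/
def SupportedIn {d : ℕ} (ν : TorusMeasure d) (S : Set (Torus d)) : Prop :=
  ∀ f : C(Torus d, ℂ), (∀ x ∈ S, f x = 0) → ν f = 0

/-- The pairing `⟨f,μ⟩ = ∫_{𝕋^d} f(x) conj(dμ(x)) = conj (μ (conj f))`. -/
def mPairing {d : ℕ} (f : C(Torus d, ℂ)) (μ : TorusMeasure d) : ℂ :=
  starRingEnd ℂ (μ (star f))

/-- `C(𝕋^d;Λ)`: the subspace of trigonometric polynomials
`f(x) = ∑_{m ∈ Λ} a_m e^{2πi m·x}` with frequencies in `Λ`. -/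
def trigPoly {d : ℕ} (Λ : Finset (Fin d → ℤ)) : Submodule ℂ C(Torus d, ℂ) :=
  Submodule.span ℂ (torusChar '' (Λ : Set (Fin d → ℤ)))

/-- For a continuous `g` with `‖g‖_∞ ≤ 1`, the assertion that `sign(ν) = g`
`ν`-almost everywhere, expressed through the standard equivalent condition
`⟨g,ν⟩ = ‖ν‖` (obtained by integrating the Radon–Nikodym identity
`∫ f d|ν| = ∫ f conj(sign ν) dν` against `f = conj g` and using `|ν|(𝕋^d) = ‖ν‖`). -/
def SignEqAE {d : ℕ} (ν : TorusMeasure d) (g : C(Torus d, ℂ)) : Prop :=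
  mPairing g ν = (‖ν‖ : ℂ)

/-- `ν` is a positive measure: it takes nonnegative real values on nonnegative real-valued
continuous functions. -/
def IsPositiveMeasure {d : ℕ} (ν : TorusMeasure d) : Prop :=
  ∀ f : C(Torus d, ℂ), (∀ x, (f x).im = 0 ∧ 0 ≤ (f x).re) → (ν f).im = 0 ∧ 0 ≤ (ν f).re

/-- The Dirac measure `δ_x`: evaluation at `x`. -/
def diracM {d : ℕ} (x : Torus d) : TorusMeasure d :=
  ContinuousMap.evalCLM ℂ x

/-- The modulation `M_n ν`, defined by `d(M_n ν)(x) = e^{2πi n·x} dν(x)`. -/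
def modulateM {d : ℕ} (n : Fin d → ℤ) (ν : TorusMeasure d) : TorusMeasure d :=
  ν.comp (ContinuousLinearMap.mul ℂ C(Torus d, ℂ) (torusChar n))

/-! If `φ ∈ C(𝕋^d;Λ)` has `|φ| ≡ 1`, then `φ * conj φ = 1`. Since the characters are linearly
independent, this identity lifts to the group algebra `ℂ[ℤ^d]`, where, `ℤ^d` having the
two-unique-sums property, only monomials divide `1`. Hence `φ = a e_m` with `m ∈ Λ` and `|a| = 1`,
so `ε(μ,Λ) = |⟨φ,μ⟩| = |μ̂(m)|`. -/

open scoped ComplexConjugate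

namespace AddMonoidAlgebra

variable {R A : Type*} [Semiring R] [NoZeroDivisors R] [AddZeroClass A]
  {p q : AddMonoidAlgebra R A}

theorem add_eq_zero_of_mul_eq_one_of_uniqueAdd (h : p * q = 1) {a b : A}
    (ha : a ∈ p.coeff.support) (hb : b ∈ q.coeff.support)
    (hab : UniqueAdd p.coeff.support q.coeff.support a b) : a + b = 0 := by
  have hne : (p * q).coeff (a + b) ≠ 0 := by
    rw [coeff_mul_add_of_uniqueAdd hab]
    exact mul_ne_zero (Finsupp.mem_support_iff.1 ha) (Finsupp.mem_support_iff.1 hb)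
  by_contra hab0
  rw [h, one_def, coeff_single, Finsupp.single_eq_of_ne hab0] at hne
  exact hne rfl

theorem exists_support_eq_singleton_of_mul_eq_one [Nontrivial R] [TwoUniqueSums A]
    (h : p * q = 1) : ∃ a, p.coeff.support = {a} := by
  have hp : p.coeff.support.Nonempty := by
    rw [Finsupp.support_nonempty_iff, Ne, coeff_eq_zero]
    rintro rfl
    exact one_ne_zero (h ▸ zero_mul q)
  have hq : q.coeff.support.Nonempty := by
    rw [Finsupp.support_nonempty_iff, Ne, coeff_eq_zero]
    rintro rfl
    exact one_ne_zero (h ▸ mul_zero p)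
  suffices hcard : p.coeff.support.card * q.coeff.support.card ≤ 1 by
    refine Finset.card_eq_one.1 (le_antisymm ?_ hp.card_pos)
    exact le_of_mul_le_of_one_le_left hcard hq.card_pos
  by_contra! hlt
  obtain ⟨⟨a₁, b₁⟩, h₁, ⟨a₂, b₂⟩, h₂, hne, hu₁, hu₂⟩ :=
    TwoUniqueSums.uniqueAdd_of_one_lt_card hlt
  rw [Finset.mem_product] at h₁ h₂
  have hs₁ := add_eq_zero_of_mul_eq_one_of_uniqueAdd h h₁.1 h₁.2 hu₁
  have hs₂ := add_eq_zero_of_mul_eq_one_of_uniqueAdd h h₂.1 h₂.2 hu₂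
  obtain ⟨rfl, rfl⟩ := hu₁ h₂.1 h₂.2 (hs₂.trans hs₁.symm)
  exact hne rfl

end AddMonoidAlgebra

namespace UnitAddTorus

open Finsupp

variable {ι : Type*} [Fintype ι]

theorem linearIndependent_mFourier : LinearIndependent ℂ (mFourier (d := ι)) :=
  LinearIndependent.of_comp _ orthonormal_mFourier.linearIndependent

variable (ι) in
def mFourierAlgHom : AddMonoidAlgebra ℂ (ι → ℤ) →ₐ[ℂ] C(UnitAddTorus ι, ℂ) :=
  AddMonoidAlgebra.lift ℂ _ _
    { toFun := fun m => mFourier m.toAdd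
      map_one' := mFourier_zero
      map_mul' := fun _ _ => ContinuousMap.ext fun _ => mFourier_add }

theorem mFourierAlgHom_apply (p : AddMonoidAlgebra ℂ (ι → ℤ)) :
    mFourierAlgHom ι p = linearCombination ℂ mFourier p.coeff := by
  rw [mFourierAlgHom, AddMonoidAlgebra.lift_apply, linearCombination_apply]
  rfl

theorem mFourierAlgHom_injective : Function.Injective (mFourierAlgHom ι) := fun p q hpq =>
  AddMonoidAlgebra.coeff_injective <| linearIndependent_mFourier <| by
    rwa [mFourierAlgHom_apply, mFourierAlgHom_apply] at hpq

theorem exists_mFourierAlgHom_eq_star (p : AddMonoidAlgebra ℂ (ι → ℤ)) :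
    ∃ q, mFourierAlgHom ι q = star (mFourierAlgHom ι p) := by
  refine ⟨∑ m ∈ p.coeff.support, AddMonoidAlgebra.single (-m) (conj (p.coeff m)), ?_⟩
  ext x
  simp only [map_sum, mFourierAlgHom, AddMonoidAlgebra.lift_single]
  simp [AddMonoidAlgebra.lift_apply, Finsupp.sum, mFourier_neg]

theorem exists_eq_smul_mFourier_of_norm_eq_one {S : Set (ι → ℤ)} {f : C(UnitAddTorus ι, ℂ)}
    (hf : f ∈ Submodule.span ℂ (mFourier '' S)) (hf1 : ∀ x, ‖f x‖ = 1) :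
    ∃ m ∈ S, ∃ a : ℂ, ‖a‖ = 1 ∧ f = a • mFourier m := by
  obtain ⟨c, hcS, rfl⟩ := (mem_span_image_iff_linearCombination ℂ).1 hf
  obtain ⟨q, hq⟩ := exists_mFourierAlgHom_eq_star (.ofCoeff c)
  have hcq : .ofCoeff c * q = 1 := by
    refine mFourierAlgHom_injective ?_
    ext x
    rw [map_mul, map_one, hq, mFourierAlgHom_apply, ContinuousMap.mul_apply,
      ContinuousMap.star_apply, ContinuousMap.one_apply, Complex.star_def, Complex.mul_conj,
      Complex.normSq_eq_norm_sq, hf1 x]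
    norm_num
  obtain ⟨m, hm⟩ := AddMonoidAlgebra.exists_support_eq_singleton_of_mul_eq_one hcq
  rw [AddMonoidAlgebra.coeff_ofCoeff] at hm
  have hc : c = single m (c m) := (support_eq_singleton.1 hm).2
  rw [hc, linearCombination_single] at hf1 ⊢
  refine ⟨m, (mem_supported ℂ c).1 hcS (by simp [hm]), c m, ?_, rfl⟩
  simpa [mFourier] using hf1 0

end UnitAddTorus

theorem minExtNorm_nonneg {d : ℕ} (μ : TorusMeasure d) (Λ : Finset (Fin d → ℤ)) :
    0 ≤ minExtNorm μ Λ :=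
  Real.sInf_nonneg <| by
    rintro _ ⟨ν, -, rfl⟩
    exact norm_nonneg ν

theorem mPairing_smul_torusChar {d : ℕ} (a : ℂ) (m : Fin d → ℤ) (μ : TorusMeasure d) :
    mPairing (a • torusChar m) μ = a * conj (mFourierCoeff μ m) := by
  have hstar : star (a • torusChar m) = conj a • torusChar (-m) := by
    ext x
    simp [torusChar]
  rw [mPairing, hstar, map_smul, smul_eq_mul, map_mul, Complex.conj_conj, mFourierCoeff]

theorem gammaSet_nonempty_of_unimodular_extremal_general {d : ℕ} (μ : TorusMeasure d)
    (Λ : Finset (Fin d → ℤ)) (φ : C(Torus d, ℂ)) (hφΛ : φ ∈ trigPoly Λ)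
    (hφμ : mPairing φ μ = (minExtNorm μ Λ : ℂ))
    (hmod : ∀ x, ‖φ x‖ = 1) :
    (gammaSet μ Λ).Nonempty := by
  obtain ⟨m, hmΛ, a, ha, hφ⟩ := UnitAddTorus.exists_eq_smul_mFourier_of_norm_eq_one hφΛ hmod
  refine ⟨m, hmΛ, ?_⟩
  have hnorm := congrArg norm hφμ
  rwa [show φ = a • torusChar m from hφ, mPairing_smul_torusChar, norm_mul, ha, one_mul,
    Complex.norm_conj, Complex.norm_real, Real.norm_of_nonneg (minExtNorm_nonneg μ Λ)] at hnorm

/-- **Proposition 2.2(a).** If `φ ∈ U` satisfies `⟨φ,μ⟩ = ε(μ,Λ)` and `|φ| ≡ 1`,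
then `Γ(μ,Λ) ≠ ∅`. -/
theorem gammaSet_nonempty_of_unimodular_extremal {d : ℕ} (μ : TorusMeasure d)
    (Λ : Finset (Fin d → ℤ)) (φ : C(Torus d, ℂ)) (hφΛ : φ ∈ trigPoly Λ)
    (hφ1 : ‖φ‖ ≤ 1) (hφμ : mPairing φ μ = (minExtNorm μ Λ : ℂ))
    (hmod : ∀ x, ‖φ x‖ = 1) :
    (gammaSet μ Λ).Nonempty :=
  gammaSet_nonempty_of_unimodular_extremal_general μ Λ φ hφΛ hφμ hmod

end
end

section
/- Let μ = δ_0 − δ_{1/2} ∈ M(𝕋) and Λ = {−1, 0, 1} ⊂ ℤ. Then ε(μ,Λ) = 2, and μ is the unique minimal extrapolation of μ from Λ, i.e. 𝓔(μ,Λ) = {δ_0 − δ_{1/2}}; hence super-resolution reconstruction of μ from its Fourier coefficients on Λ is possible. -/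
/- Setting: `M(𝕋^d)`, the space of complex bounded Radon measures on the `d`-dimensional
torus, is identified with the continuous dual of `C(𝕋^d, ℂ)` via the Riesz representation
theorem; the total variation norm corresponds to the operator norm. -/

open MeasureTheory Complex Real

noncomputable section

attribute [local instance] ZeroLEOneClass.factZeroLtOne

/-!
Test an extrapolation `ν` against `h(x) = cos 2πx = (e₋₁ + e₁)/2`: it lies in `C(𝕋;Λ)`, has
`‖h‖∞ = 1` and `μ(h) = 2`, so `‖ν‖ ≥ |ν(h)| = 2`, with equality for `μ`. If `‖ν‖ = 2 = ν(h)`,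
then `ν` is carried by the peak set `{|h| = 1} = {0, 1/2}`: perturbing `h` by a small multiple
of a function `f` vanishing there barely changes `‖h‖∞` but adds a multiple of `|ν(f)|` to
`ν(h)`. A functional carried by two points is fixed by its values on `1` and `h`, which are
`μ(1) = 0` and `μ(h) = 2`.
-/

section NormingFunctional

variable {X : Type*} [TopologicalSpace X] [CompactSpace X] {h f : C(X, ℂ)}

lemma exists_norm_le_one_sub_of_le_norm (hh : ‖h‖ ≤ 1)
    (hf : ∀ x, ‖h x‖ = 1 → f x = 0) {ε : ℝ} (hε : 0 < ε) :
    ∃ δ > 0, ∀ x, ε ≤ ‖f x‖ → ‖h x‖ ≤ 1 - δ := by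
  set K := {x | ε ≤ ‖f x‖}
  rcases K.eq_empty_or_nonempty with hK | hK
  · exact ⟨1, one_pos, fun x hx => absurd (show x ∈ K from hx) (hK ▸ Set.notMem_empty x)⟩
  have hKc : IsCompact K := (isClosed_le continuous_const f.continuous.norm).isCompact
  obtain ⟨y, hyK, hy⟩ := hKc.exists_isMaxOn hK h.continuous.norm.continuousOn
  have hy1 : ‖h y‖ < 1 := by
    refine (h.norm_coe_le_norm y |>.trans hh).lt_of_ne fun hy1 => ?_
    have : ε ≤ ‖f y‖ := hyK
    rw [hf y hy1, norm_zero] at this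
    linarith
  exact ⟨1 - ‖h y‖, by linarith, fun x hx => by linarith [show ‖h x‖ ≤ ‖h y‖ from hy hx]⟩

/-- With `c ν(f) = |ν(f)|` and `t = δ / ‖f‖`, `g = h + t c f` has `‖g‖ ≤ 1 + t ε` and
`ν(g) = ‖ν‖ + t |ν(f)|`. -/
lemma norm_apply_le_of_apply_eq_opNorm (ν : C(X, ℂ) →L[ℂ] ℂ) (hh : ‖h‖ ≤ 1)
    (hνh : ν h = ‖ν‖) {ε δ : ℝ} (hε : 0 ≤ ε) (hδ : 0 < δ)
    (hfδ : ∀ x, ε ≤ ‖f x‖ → ‖h x‖ ≤ 1 - δ) : ‖ν f‖ ≤ ‖ν‖ * ε := by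
  rcases eq_or_ne f 0 with rfl | hf0
  · simp only [map_zero, norm_zero]
    positivity
  obtain ⟨c, hc, hcν⟩ := RCLike.exists_norm_eq_mul_self (ν f)
  replace hcν : ((‖ν f‖ : ℝ) : ℂ) = c * ν f := hcν
  have hfpos : 0 < ‖f‖ := norm_pos_iff.mpr hf0
  set t := δ / ‖f‖
  have ht : 0 < t := div_pos hδ hfpos
  set g := h + (t * c : ℂ) • f
  have hg : ‖g‖ ≤ 1 + t * ε := by
    refine (ContinuousMap.norm_le _ (by positivity)).mpr fun x => ?_
    have hgx : ‖g x‖ ≤ ‖h x‖ + t * ‖f x‖ := by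
      calc ‖g x‖ ≤ ‖h x‖ + ‖(t * c : ℂ) * f x‖ := norm_add_le _ _
        _ = ‖h x‖ + t * ‖f x‖ := by
          rw [norm_mul, norm_mul, hc, Complex.norm_real, Real.norm_of_nonneg ht.le, mul_one]
    by_cases hfx : ε ≤ ‖f x‖
    · have : t * ‖f x‖ ≤ δ := calc
        t * ‖f x‖ ≤ t * ‖f‖ := by gcongr; exact f.norm_coe_le_norm x
        _ = δ := div_mul_cancel₀ _ hfpos.ne'
      nlinarith [hfδ x hfx]
    · have : t * ‖f x‖ ≤ t * ε := by gcongr; exact (not_le.mp hfx).le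
      linarith [h.norm_coe_le_norm x]
  have hνg : ν g = ((‖ν‖ + t * ‖ν f‖ : ℝ) : ℂ) := by
    simp only [g, map_add, map_smul, hνh, smul_eq_mul, mul_assoc, ← hcν]
    push_cast
    ring
  have : ‖ν‖ + t * ‖ν f‖ ≤ ‖ν‖ * (1 + t * ε) := calc
    ‖ν‖ + t * ‖ν f‖ = ‖ν g‖ := by
      rw [hνg, Complex.norm_real, Real.norm_of_nonneg (by positivity)]
    _ ≤ ‖ν‖ * ‖g‖ := ν.le_opNorm g
    _ ≤ ‖ν‖ * (1 + t * ε) := by gcongr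
  exact le_of_mul_le_mul_left (by linarith) ht

theorem apply_eq_zero_of_apply_eq_opNorm (ν : C(X, ℂ) →L[ℂ] ℂ)
    (hh : ‖h‖ ≤ 1) (hνh : ν h = ‖ν‖) (hf : ∀ x, ‖h x‖ = 1 → f x = 0) : ν f = 0 := by
  refine norm_le_zero_iff.mp (le_of_forall_pos_le_add fun ε hε => ?_)
  have hε' : 0 < ε / (‖ν‖ + 1) := by positivity
  obtain ⟨δ, hδ, hfδ⟩ := exists_norm_le_one_sub_of_le_norm hh hf hε'
  calc ‖ν f‖ ≤ ‖ν‖ * (ε / (‖ν‖ + 1)) :=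
        norm_apply_le_of_apply_eq_opNorm ν hh hνh hε'.le hδ hfδ
    _ ≤ 0 + ε := by
      rw [zero_add, mul_div_assoc', div_le_iff₀ (by positivity)]
      nlinarith

end NormingFunctional

lemma apply_eq_of_forall_apply_eq_zero {X : Type*} [TopologicalSpace X]
    (ν : C(X, ℂ) →L[ℂ] ℂ) {a b : X} (hν : ∀ f : C(X, ℂ), f a = 0 → f b = 0 → ν f = 0)
    {p q : C(X, ℂ)} (hpa : p a = 1) (hpb : p b = 0) (hqa : q a = 0) (hqb : q b = 1) (f : C(X, ℂ)) :
    ν f = f a * ν p + f b * ν q := by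
  have := hν (f - f a • p - f b • q) (by simp [hpa, hqa]) (by simp [hpb, hqb])
  simp only [map_sub, map_smul, smul_eq_mul] at this
  linear_combination this

lemma norm_diracM_le {d : ℕ} (x : Torus d) : ‖diracM x‖ ≤ 1 :=
  ContinuousLinearMap.opNorm_le_bound _ zero_le_one fun f => by
    rw [one_mul]; exact f.norm_coe_le_norm x

lemma IsExtrapolation.apply_eq_of_mem_trigPoly {d : ℕ} {μ ν : TorusMeasure d}
    {Λ : Finset (Fin d → ℤ)} (hΛ : ∀ m ∈ Λ, -m ∈ Λ) (hν : IsExtrapolation μ Λ ν)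
    {f : C(Torus d, ℂ)} (hf : f ∈ trigPoly Λ) : ν f = μ f := by
  refine LinearMap.eqOn_span' (f := ν.toLinearMap) (g := μ.toLinearMap) ?_ hf
  rintro _ ⟨m, hm, rfl⟩
  simpa [mFourierCoeff] using hν (-m) (hΛ m hm)

lemma minExtNorm_eq_of_forall_norm_le {d : ℕ} {μ ν₀ : TorusMeasure d}
    {Λ : Finset (Fin d → ℤ)} (h₀ : IsExtrapolation μ Λ ν₀)
    (hle : ∀ ν, IsExtrapolation μ Λ ν → ‖ν₀‖ ≤ ‖ν‖) : minExtNorm μ Λ = ‖ν₀‖ :=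
  IsLeast.csInf_eq ⟨⟨ν₀, h₀, rfl⟩, by rintro _ ⟨ν, hν, rfl⟩; exact hle ν hν⟩

namespace DiracDifference

abbrev halfPoint : Torus 1 := fun _ => ((1 / 2 : ℝ) : AddCircle (1 : ℝ))

abbrev diracDiff : TorusMeasure 1 := diracM 0 - diracM halfPoint

abbrev unitFreqs : Finset (Fin 1 → ℤ) := {fun _ => -1, fun _ => 0, fun _ => 1}

/-- `x ↦ cos (2πx)`. -/
def cosChar : C(Torus 1, ℂ) := (2⁻¹ : ℂ) • (torusChar (fun _ => -1) + torusChar (fun _ => 1))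

lemma torusChar_fin_one_apply (m : Fin 1 → ℤ) (x : Torus 1) :
    torusChar m x = fourier (m 0) (x 0) :=
  Fin.prod_univ_one fun i => fourier (m i) (x i)

lemma cosChar_apply (x : Torus 1) : cosChar x = ((fourier 1 (x 0) : ℂ).re : ℂ) := by
  simp only [cosChar, ContinuousMap.smul_apply, ContinuousMap.add_apply, torusChar_fin_one_apply,
    fourier_neg, Complex.re_eq_add_conj, smul_eq_mul]
  ring

lemma norm_cosChar_le : ‖cosChar‖ ≤ 1 :=
  (ContinuousMap.norm_le _ zero_le_one).mpr fun x => by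
    rw [cosChar_apply, Complex.norm_real, Real.norm_eq_abs]
    exact (Complex.abs_re_le_norm _).trans (Circle.norm_coe _).le

lemma fourier_one_half : fourier 1 (((1 / 2 : ℝ)) : AddCircle (1 : ℝ)) = -1 := by
  simpa using fourier_add_half_inv_index one_ne_zero one_pos (0 : AddCircle (1 : ℝ))

lemma cosChar_zero : cosChar 0 = 1 := by
  simp [cosChar_apply]

lemma cosChar_halfPoint : cosChar halfPoint = -1 := by
  rw [cosChar_apply, show halfPoint 0 = ((1 / 2 : ℝ) : AddCircle (1 : ℝ)) from rfl,
    fourier_one_half]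
  simp

lemma fourier_one_injective : Function.Injective (fourier 1 : AddCircle (1 : ℝ) → ℂ) :=
  fun _ _ h => AddCircle.injective_toCircle one_ne_zero <|
    Circle.ext (by simpa [fourier_one] using h)

lemma eq_zero_or_eq_halfPoint {x : Torus 1} (hx : ‖cosChar x‖ = 1) : x = 0 ∨ x = halfPoint := by
  rw [cosChar_apply, Complex.norm_real, Real.norm_eq_abs] at hx
  have hnorm : ‖fourier 1 (x 0)‖ = 1 := Circle.norm_coe _
  have hreal : fourier 1 (x 0) = (fourier 1 (x 0)).re :=
    Complex.ext rfl (by simpa using Complex.abs_re_eq_norm.mp (hx.trans hnorm.symm))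
  rcases (abs_eq zero_le_one).mp hx with h1 | h1 <;> rw [h1] at hreal
  · exact .inl (funext (Fin.forall_fin_one.mpr (fourier_one_injective (by simpa using hreal))))
  · refine .inr (funext (Fin.forall_fin_one.mpr (fourier_one_injective ?_)))
    exact hreal.trans (by push_cast; exact fourier_one_half.symm)

lemma cosChar_mem_trigPoly : cosChar ∈ trigPoly unitFreqs :=
  Submodule.smul_mem _ _ (add_mem (Submodule.subset_span ⟨_, by simp, rfl⟩)
    (Submodule.subset_span ⟨_, by simp, rfl⟩))

lemma one_mem_trigPoly : (1 : C(Torus 1, ℂ)) ∈ trigPoly unitFreqs := by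
  have : torusChar (d := 1) (fun _ => 0) = 1 := by ext x; simp [torusChar_fin_one_apply]
  exact this ▸ Submodule.subset_span ⟨_, by simp, rfl⟩

lemma neg_mem_unitFreqs : ∀ m ∈ unitFreqs, -m ∈ unitFreqs := by decide

lemma diracDiff_apply (f : C(Torus 1, ℂ)) : diracDiff f = f 0 - f halfPoint := rfl

variable {ν : TorusMeasure 1}

lemma apply_cosChar (hν : IsExtrapolation diracDiff unitFreqs ν) : ν cosChar = 2 := by
  rw [hν.apply_eq_of_mem_trigPoly neg_mem_unitFreqs cosChar_mem_trigPoly, diracDiff_apply,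
    cosChar_zero, cosChar_halfPoint]
  norm_num

lemma apply_one (hν : IsExtrapolation diracDiff unitFreqs ν) : ν 1 = 0 := by
  rw [hν.apply_eq_of_mem_trigPoly neg_mem_unitFreqs one_mem_trigPoly, diracDiff_apply]
  simp

lemma two_le_norm (hν : IsExtrapolation diracDiff unitFreqs ν) : 2 ≤ ‖ν‖ := calc
  (2 : ℝ) = ‖ν cosChar‖ := by rw [apply_cosChar hν]; norm_num
  _ ≤ ‖ν‖ * ‖cosChar‖ := ν.le_opNorm _
  _ ≤ ‖ν‖ := mul_le_of_le_one_right ν.opNorm_nonneg norm_cosChar_le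

lemma norm_diracDiff : ‖diracDiff‖ = 2 := by
  refine le_antisymm ?_ (two_le_norm fun _ _ => rfl)
  calc ‖diracDiff‖ ≤ ‖diracM (0 : Torus 1)‖ + ‖diracM halfPoint‖ :=
      norm_sub_le (diracM 0) (diracM halfPoint)
    _ ≤ 1 + 1 := add_le_add (norm_diracM_le _) (norm_diracM_le _)
    _ = 2 := one_add_one_eq_two

lemma eq_diracDiff (hν : IsExtrapolation diracDiff unitFreqs ν) (hn : ‖ν‖ = 2) :
    ν = diracDiff := by
  have hνh : ν cosChar = ‖ν‖ := by rw [apply_cosChar hν, hn]; norm_num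
  have hsupp (f : C(Torus 1, ℂ)) (h0 : f 0 = 0) (h1 : f halfPoint = 0) : ν f = 0 :=
    apply_eq_zero_of_apply_eq_opNorm ν norm_cosChar_le hνh fun x hx =>
      (eq_zero_or_eq_halfPoint hx).elim (· ▸ h0) (· ▸ h1)
  ext f
  rw [apply_eq_of_forall_apply_eq_zero ν hsupp (p := (2⁻¹ : ℂ) • (1 + cosChar))
    (q := (2⁻¹ : ℂ) • (1 - cosChar)) (by simp [cosChar_zero]; norm_num)
    (by simp [cosChar_halfPoint]) (by simp [cosChar_zero])
    (by simp [cosChar_halfPoint]; norm_num) f]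
  simp only [map_smul, map_add, map_sub, apply_cosChar hν, apply_one hν, diracDiff_apply,
    smul_eq_mul]
  ring

end DiracDifference

/-- **Example 3.2.** For `μ = δ_0 − δ_{1/2} ∈ M(𝕋)` and `Λ = {−1, 0, 1}`:
`ε(μ,Λ) = 2` and `μ` is the unique minimal extrapolation, `𝓔(μ,Λ) = {μ}`; hence
super-resolution reconstruction of `μ` from `Λ` is possible. -/
theorem diracDifference_unique_minimalExtrapolation :
    minExtNorm (diracM (fun _ => (0 : AddCircle (1 : ℝ))) -
        diracM (fun _ => ((1 / 2 : ℝ) : AddCircle (1 : ℝ))))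
      ({fun _ => -1, fun _ => 0, fun _ => 1} : Finset (Fin 1 → ℤ)) = 2 ∧
    {ν : TorusMeasure 1 |
        IsMinimalExtrapolation
          (diracM (fun _ => (0 : AddCircle (1 : ℝ))) -
            diracM (fun _ => ((1 / 2 : ℝ) : AddCircle (1 : ℝ))))
          ({fun _ => -1, fun _ => 0, fun _ => 1} : Finset (Fin 1 → ℤ)) ν} =
      {diracM (fun _ => (0 : AddCircle (1 : ℝ))) -
        diracM (fun _ => ((1 / 2 : ℝ) : AddCircle (1 : ℝ)))} := by
  have hmin : minExtNorm DiracDifference.diracDiff DiracDifference.unitFreqs = 2 :=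
    (minExtNorm_eq_of_forall_norm_le (fun _ _ => rfl) fun _ hν =>
      DiracDifference.norm_diracDiff.trans_le (DiracDifference.two_le_norm hν)).trans
      DiracDifference.norm_diracDiff
  refine ⟨hmin, Set.eq_singleton_iff_unique_mem.mpr ⟨?_, fun ν hν => ?_⟩⟩
  · exact ⟨fun _ _ => rfl, DiracDifference.norm_diracDiff.trans hmin.symm⟩
  · exact DiracDifference.eq_diracDiff hν.1 (hν.2.trans hmin)

end
end
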